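/- Let G be a spanning subgraph of K_{m,n} with partite sets X (|X| = m) and Y (|Y| = n) that is P_4-saturated relative to K_{m,n}. If G contains both a star with at least two leaves in X and a star with at least two leaves in Y (or an isolated edge), then G has no isolated vertices, every component of G is a nontrivial star, the number of components equals α'(G), and |E(G)| = m + n − α'(G). -/

import Mathlib

/-- The graph obtained from `G` by adding the edge `uv`. -/
def addEdge {V : Type*} (G : SimpleGraph V) (u v : V) : SimpleGraph V :=
  G ⊔ SimpleGraph.fromEdgeSet {s(u, v)}

/-- `G` contains a path on 4 vertices as a subgraph. -/
def HasP4 {V : Type*} (G : SimpleGraph V) : Prop :=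
  ∃ a b c d : V, a ≠ b ∧ a ≠ c ∧ a ≠ d ∧ b ≠ c ∧ b ≠ d ∧ c ≠ d ∧
    G.Adj a b ∧ G.Adj b c ∧ G.Adj c d

/-- `G` is a spanning subgraph of `K_{m,n}` (on vertex set `X ⊕ Y`) that is
`P_4`-saturated relative to `K_{m,n}`. -/
def P4SatBip {m n : ℕ} (G : SimpleGraph (Fin m ⊕ Fin n)) : Prop :=
  (∀ x y : Fin m, ¬ G.Adj (.inl x) (.inl y)) ∧
  (∀ x y : Fin n, ¬ G.Adj (.inr x) (.inr y)) ∧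
  ¬ HasP4 G ∧
  ∀ (x : Fin m) (y : Fin n), ¬ G.Adj (.inl x) (.inr y) →
    HasP4 (addEdge G (.inl x) (.inr y))

/-- The set `S` induces a star in `G` with some center `x ∈ S`. -/
def IsStarOn {V : Type*} (G : SimpleGraph V) (S : Set V) : Prop :=
  ∃ x ∈ S, ∀ u ∈ S, ∀ v ∈ S, (G.Adj u v ↔ ((u = x ∧ v ≠ x) ∨ (v = x ∧ u ≠ x)))

/-- The matching number of `G`: the maximum number of edges of a matching in `G`. -/
noncomputable def matchingNumber {V : Type*} (G : SimpleGraph V) : ℕ :=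
  sSup {k | ∃ M : G.Subgraph, M.IsMatching ∧ M.edgeSet.ncard = k}

/-! In a triangle-free `P₄`-free graph a vertex with two distinct neighbours is a star centre:
its neighbours have no other neighbour. So once no vertex is isolated, every component is a
nontrivial star; a maximum matching then takes one edge per star, and every vertex other than
a centre lies on exactly one edge, to its centre. Saturation rules out isolated vertices: an
isolated vertex could be joined to a star centre on the other side (the centre of the `X`-star,
of the `Y`-star, or an end of the isolated edge) without creating a `P₄`. -/

open SimpleGraph

lemma addEdge_adj {V : Type*} (G : SimpleGraph V) (u v p q : V) :
    (addEdge G u v).Adj p q ↔ G.Adj p q ∨ (p ≠ q ∧ s(p, q) = s(u, v)) := by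
  simp only [addEdge, sup_adj, fromEdgeSet_adj, Set.mem_singleton_iff]
  tauto

lemma addEdge_comm {V : Type*} (G : SimpleGraph V) (u v : V) :
    addEdge G u v = addEdge G v u := by
  rw [addEdge, addEdge, Sym2.eq_swap]

namespace SimpleGraph

variable {V : Type*} {G : SimpleGraph V}

/-- The component of `x` is a star centred at `x` (possibly the single vertex `x`). -/
def IsStarCenter (G : SimpleGraph V) (x : V) : Prop :=
  ∀ ⦃u⦄, G.Adj x u → ∀ ⦃w⦄, G.Adj u w → w = x

def IsStarForest (G : SimpleGraph V) : Prop :=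
  ∀ c : G.ConnectedComponent,
    ∃ x y, G.connectedComponentMk x = c ∧ IsStarCenter G x ∧ G.Adj x y

lemma eq_or_eq_of_adj_of_adj_of_adj (hP4 : ¬HasP4 G) (hK3 : G.CliqueFree 3) {a b c d : V}
    (hab : G.Adj a b) (hbc : G.Adj b c) (hcd : G.Adj c d) : a = c ∨ b = d := by
  classical
  by_contra! h
  have had : a ≠ d := by
    rintro rfl
    exact hK3 {a, b, c} (is3Clique_triple_iff.2 ⟨hab, hcd.symm, hbc⟩)
  exact hP4 ⟨a, b, c, d, hab.ne, h.1, had, hbc.ne, h.2, hcd.ne, hab, hbc, hcd⟩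

lemma isStarCenter_of_adj_of_adj (hP4 : ¬HasP4 G) (hK3 : G.CliqueFree 3) {v a b : V}
    (hva : G.Adj v a) (hvb : G.Adj v b) (hab : a ≠ b) : IsStarCenter G v := by
  intro c hvc z hcz
  have key : ∀ a', G.Adj v a' → a' ≠ c → z = v := fun a' hva' hne =>
    ((eq_or_eq_of_adj_of_adj_of_adj hP4 hK3 hva'.symm hvc hcz).resolve_left hne).symm
  by_cases hac : a = c
  · exact key b hvb fun hbc => hab (hac.trans hbc.symm)
  · exact key a hva hac

lemma isStarCenter_or_isStarCenter_of_adj (hP4 : ¬HasP4 G) (hK3 : G.CliqueFree 3) {v w : V}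
    (hvw : G.Adj v w) : IsStarCenter G v ∨ IsStarCenter G w := by
  by_cases hv : ∃ a, G.Adj v a ∧ a ≠ w
  · obtain ⟨a, hva, haw⟩ := hv
    exact .inl (isStarCenter_of_adj_of_adj hP4 hK3 hva hvw haw)
  by_cases hw : ∃ b, G.Adj w b ∧ b ≠ v
  · obtain ⟨b, hwb, hbv⟩ := hw
    exact .inr (isStarCenter_of_adj_of_adj hP4 hK3 hwb hvw.symm hbv)
  push Not at hv hw
  refine .inl fun u hvu z huz => ?_
  rw [hv u hvu] at huz
  exact hw z huz

lemma isStarCenter_of_ncard_neighborSet_eq_one {x y : V} (hxy : G.Adj x y)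
    (hx : (G.neighborSet x).ncard = 1) (hy : (G.neighborSet y).ncard = 1) : IsStarCenter G x := by
  have mem_eq : ∀ {s : Set V} {a b : V}, s.ncard = 1 → a ∈ s → b ∈ s → a = b := by
    intro s a b hs ha hb
    obtain ⟨c, rfl⟩ := Set.ncard_eq_one.1 hs
    exact (Set.eq_of_mem_singleton ha).trans (Set.eq_of_mem_singleton hb).symm
  intro u hxu w huw
  obtain rfl : u = y := mem_eq hx hxu hxy
  exact mem_eq hy huw hxy.symm

/-- In `G + uv` with `v` isolated in `G`, a `P₄` must start with the new edge `vu`. -/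
lemma not_isStarCenter_of_hasP4_addEdge (hP4 : ¬HasP4 G) {u v : V} (hv : ∀ w, ¬G.Adj v w)
    (h : HasP4 (addEdge G u v)) : ¬IsStarCenter G u := by
  obtain ⟨a, b, c, d, hab, hac, had, hbc, hbd, hcd, h₁, h₂, h₃⟩ := h
  have old : ∀ {p q}, (addEdge G u v).Adj p q → p ≠ v → q ≠ v → G.Adj p q := by
    intro p q hpq hp hq
    rw [addEdge_adj] at hpq
    refine hpq.resolve_right fun ⟨_, he⟩ => ?_
    rcases Sym2.eq_iff.1 he with ⟨-, rfl⟩ | ⟨rfl, -⟩ <;> contradiction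
  have new : ∀ {q}, (addEdge G u v).Adj v q → q = u := by
    intro q hq
    rw [addEdge_adj] at hq
    rcases hq.resolve_left (hv q) with ⟨-, he⟩
    rcases Sym2.eq_iff.1 he with ⟨rfl, rfl⟩ | ⟨-, rfl⟩ <;> rfl
  intro hu
  by_cases hav : a = v
  · subst hav
    obtain rfl := new h₁
    exact hbd (hu (old h₂ hab.symm hac.symm) (old h₃ hac.symm had.symm)).symm
  by_cases hdv : d = v
  · subst hdv
    obtain rfl := new h₃.symm
    exact hac (hu (old h₂.symm hcd hbd) (old h₁.symm hbd had))
  by_cases hbv : b = v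
  · subst hbv
    exact hac ((new h₁.symm).trans (new h₂).symm)
  by_cases hcv : c = v
  · subst hcv
    exact hbd ((new h₂.symm).trans (new h₃).symm)
  exact hP4 ⟨a, b, c, d, hab, hac, had, hbc, hbd, hcd,
    old h₁ hav hbv, old h₂ hbv hcv, old h₃ hcv hdv⟩

namespace IsStarCenter

variable {x : V}

lemma eq_or_adj_of_reachable (hx : IsStarCenter G x) {u : V} (hxu : G.Reachable x u) :
    u = x ∨ G.Adj x u := by
  rw [reachable_eq_reflTransGen] at hxu
  induction hxu with
  | refl => exact .inl rfl
  | tail _ hbc ih =>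
    rcases ih with rfl | hxb
    · exact .inr hbc
    · exact .inl (hx hxb hbc)

lemma eq_or_eq_of_adj (hx : IsStarCenter G x) {u w : V} (hxu : G.Reachable x u)
    (huw : G.Adj u w) : u = x ∨ w = x :=
  (hx.eq_or_adj_of_reachable hxu).imp_right fun hxu => hx hxu huw

lemma supp_connectedComponentMk (hx : IsStarCenter G x) :
    (G.connectedComponentMk x).supp = insert x (G.neighborSet x) := by
  ext u
  rw [ConnectedComponent.mem_supp_iff, ConnectedComponent.eq]
  refine ⟨fun hux => hx.eq_or_adj_of_reachable hux.symm, ?_⟩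
  rintro (rfl | hxu)
  · rfl
  · exact hxu.reachable.symm

lemma isStarOn (hx : IsStarCenter G x) : IsStarOn G (insert x (G.neighborSet x)) := by
  refine ⟨x, Set.mem_insert _ _, fun u hu v hv => ⟨fun huv => ?_, ?_⟩⟩
  · rcases hu with rfl | hxu
    · exact .inl ⟨rfl, huv.ne'⟩
    · exact .inr ⟨hx hxu huv, hxu.ne'⟩
  · rintro (⟨rfl, hvx⟩ | ⟨rfl, hux⟩)
    · exact hv.resolve_left hvx
    · exact (hu.resolve_left hux).symm

end IsStarCenter

lemma isStarForest_of_forall_neighborSet_nonempty (hP4 : ¬HasP4 G) (hK3 : G.CliqueFree 3)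
    (hG : ∀ v, (G.neighborSet v).Nonempty) : IsStarForest G := by
  intro c
  obtain ⟨v, rfl⟩ := c.exists_rep
  obtain ⟨w, hvw⟩ := hG v
  rcases isStarCenter_or_isStarCenter_of_adj hP4 hK3 hvw with hv | hw
  · exact ⟨v, w, rfl, hv, hvw⟩
  · exact ⟨w, v, (ConnectedComponent.connectedComponentMk_eq_of_adj hvw).symm, hw, hvw.symm⟩

lemma matchingNumber_eq_ncard_edgeSet {M : G.Subgraph} (hM : M.IsMatching)
    (hmax : ∀ M' : G.Subgraph, M'.IsMatching → M'.edgeSet.ncard ≤ M.edgeSet.ncard) :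
    matchingNumber G = M.edgeSet.ncard := by
  have hub : M.edgeSet.ncard ∈ upperBounds
      {k | ∃ M' : G.Subgraph, M'.IsMatching ∧ M'.edgeSet.ncard = k} := by
    rintro _ ⟨M', hM', rfl⟩
    exact hmax M' hM'
  exact le_antisymm (csSup_le ⟨_, M, hM, rfl⟩ hub) (le_csSup ⟨_, hub⟩ ⟨M, hM, rfl⟩)

namespace IsStarForest

variable (hF : IsStarForest G)
include hF

lemma isStarOn_supp (c : G.ConnectedComponent) : IsStarOn G c.supp := by
  obtain ⟨x, -, rfl, hx, -⟩ := hF c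
  rw [hx.supp_connectedComponentMk]
  exact hx.isStarOn

lemma two_le_ncard_supp [Finite V] (c : G.ConnectedComponent) : 2 ≤ c.supp.ncard := by
  obtain ⟨x, y, rfl, hx, hxy⟩ := hF c
  rw [hx.supp_connectedComponentMk, ← Set.ncard_pair hxy.ne]
  exact Set.ncard_le_ncard (Set.insert_subset_insert (Set.singleton_subset_iff.2 hxy))

lemma exists_isMatching_ncard_edgeSet_eq :
    ∃ M : G.Subgraph, M.IsMatching ∧ M.edgeSet.ncard = Nat.card G.ConnectedComponent := by
  choose x y hx _ hxy using hF
  have hy : ∀ c, G.connectedComponentMk (y c) = c := fun c =>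
    (ConnectedComponent.connectedComponentMk_eq_of_adj (hxy c)).symm.trans (hx c)
  have hsupp : ∀ c v, v ∈ (G.subgraphOfAdj (hxy c)).support →
      G.connectedComponentMk v = c := by
    intro c v hv
    rcases (G.subgraphOfAdj (hxy c)).support_subset_verts hv with rfl | rfl
    exacts [hx c, hy c]
  refine ⟨⨆ c, G.subgraphOfAdj (hxy c), ?_, ?_⟩
  · exact Subgraph.IsMatching.iSup (fun c => .subgraphOfAdj (hxy c)) fun c c' hne =>
      Set.disjoint_left.2 fun v hv hv' => hne ((hsupp c v hv).symm.trans (hsupp c' v hv'))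
  rw [Subgraph.edgeSet_iSup]
  simp only [edgeSet_subgraphOfAdj, Set.iUnion_singleton_eq_range]
  refine Set.ncard_range_of_injective fun c c' h => ?_
  rcases Sym2.eq_iff.1 h with ⟨h, -⟩ | ⟨h, -⟩
  · rw [← hx c, h, hx c']
  · rw [← hx c, h, hy c']

lemma ncard_edgeSet_le_of_isMatching [Finite V] {M : G.Subgraph} (hM : M.IsMatching) :
    M.edgeSet.ncard ≤ Nat.card G.ConnectedComponent := by
  choose x _ hx hx' _ using hF
  rw [← Nat.card_coe_set_eq]
  -- every edge of `M` contains the centre of its component, and is the `M`-edge at that centre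
  refine (Nat.card_le_card_of_surjective
    (fun c : {c // x c ∈ M.verts} => hM.toEdge ⟨x c, c.2⟩) ?_).trans
    (Finite.card_subtype_le _)
  rintro ⟨e, he⟩
  induction e using Sym2.ind with
  | _ a b =>
    rcases (hx' _).eq_or_eq_of_adj (ConnectedComponent.exact (hx _)) (M.adj_sub he) with h | h
    · obtain ⟨c, rfl⟩ : ∃ c, a = x c := ⟨_, h⟩
      exact ⟨⟨c, he.fst_mem⟩, hM.toEdge_eq_of_adj he⟩
    · obtain ⟨c, rfl⟩ : ∃ c, b = x c := ⟨_, h⟩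
      exact ⟨⟨c, he.snd_mem⟩,
        (hM.toEdge_eq_toEdge_of_adj he).symm.trans (hM.toEdge_eq_of_adj he)⟩

lemma matchingNumber_eq [Finite V] : matchingNumber G = Nat.card G.ConnectedComponent := by
  obtain ⟨M, hM, hcard⟩ := hF.exists_isMatching_ncard_edgeSet_eq
  rw [← hcard]
  exact matchingNumber_eq_ncard_edgeSet hM fun M' hM' =>
    hcard ▸ hF.ncard_edgeSet_le_of_isMatching hM'

lemma ncard_edgeSet [Finite V] : G.edgeSet.ncard = Nat.card V - Nat.card G.ConnectedComponent := by
  choose x _ hx hx' _ using hF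
  set center : V → V := fun v => x (G.connectedComponentMk v)
  have hreach : ∀ v, G.Reachable (center v) v := fun v => ConnectedComponent.exact (hx _)
  have hcenter_center : ∀ v, center (center v) = center v := fun v => by simp only [center, hx]
  have hcenter_eq : ∀ {v w}, G.Adj v w → center w = center v := fun hvw => by
    simp only [center, ConnectedComponent.connectedComponentMk_eq_of_adj hvw]
  have hrange : (Set.range x)ᶜ = {v | v ≠ center v} := by
    ext v
    simp only [Set.mem_compl_iff, Set.mem_range, Set.mem_ofPred_eq, not_iff_not]
    refine ⟨?_, fun h => ⟨_, h.symm⟩⟩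
    rintro ⟨c, rfl⟩
    simp only [center, hx]
  -- each edge is `s(center v, v)` for exactly one non-centre `v`
  have hinj : Set.InjOn (fun v => s(center v, v)) {v | v ≠ center v} := by
    intro v _ w hw h
    rcases Sym2.eq_iff.1 h with ⟨-, h⟩ | ⟨h, -⟩
    · exact h
    · exact absurd (by rw [← h, hcenter_center]) hw
  have himage : (fun v => s(center v, v)) '' {v | v ≠ center v} = G.edgeSet := by
    refine Set.Subset.antisymm ?_ fun e he => ?_
    · rintro _ ⟨v, hv, rfl⟩
      exact ((hx' _).eq_or_adj_of_reachable (hreach v)).resolve_left hv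
    induction e using Sym2.ind with
    | _ a b =>
      have hab : G.Adj a b := he
      rcases (hx' _).eq_or_eq_of_adj (hreach a) hab with h | h <;> change _ = center a at h
      · refine ⟨b, show b ≠ center b by rw [hcenter_eq hab, ← h]; exact hab.ne', ?_⟩
        change s(center b, b) = s(a, b)
        rw [hcenter_eq hab, ← h]
      · refine ⟨a, show a ≠ center a by rw [← h]; exact hab.ne, ?_⟩
        change s(center a, a) = s(a, b)
        rw [← h, Sym2.eq_swap]
  have hx_inj : Function.Injective x := fun c c' h => by rw [← hx c, h, hx c']
  rw [← himage, hinj.ncard_image, ← hrange, Set.ncard_compl,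
    Set.ncard_range_of_injective hx_inj]

end IsStarForest

end SimpleGraph

namespace P4SatBip

variable {m n : ℕ} {G : SimpleGraph (Fin m ⊕ Fin n)}

lemma cliqueFree_three (hsat : P4SatBip G) : G.CliqueFree 3 := by
  have hc : G.Coloring Bool := Coloring.mk Sum.isLeft fun {v w} hvw => by
    cases v <;> cases w <;> simp_all [hsat.1, hsat.2.1]
  exact hc.colorable.cliqueFree (by simp)

lemma neighborSet_nonempty (hsat : P4SatBip G) (hX : ∃ x, IsStarCenter G (.inl x))
    (hY : ∃ y, IsStarCenter G (.inr y)) (v : Fin m ⊕ Fin n) : (G.neighborSet v).Nonempty := by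
  obtain ⟨-, -, hP4, hsat⟩ := hsat
  by_contra hv
  have hiso : ∀ w, ¬G.Adj v w := fun w hw => hv ⟨w, hw⟩
  cases v with
  | inl x =>
    obtain ⟨y, hy⟩ := hY
    refine not_isStarCenter_of_hasP4_addEdge hP4 hiso ?_ hy
    rw [addEdge_comm]
    exact hsat x y (hiso _)
  | inr y =>
    obtain ⟨x, hx⟩ := hX
    exact not_isStarCenter_of_hasP4_addEdge hP4 hiso (hsat x y fun h => hiso _ h.symm) hx

end P4SatBip

/-- A `P_4`-saturated subgraph of `K_{m,n}` containing an `X`-star and either a `Y`-star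
or an isolated edge has no isolated vertices, all components nontrivial stars,
`α'(G)` components, and exactly `m + n - α'(G)` edges. -/
theorem stmt10 (m n : ℕ) (G : SimpleGraph (Fin m ⊕ Fin n)) (hsat : P4SatBip G)
    (hX : ∃ (y : Fin n) (x₁ x₂ : Fin m), x₁ ≠ x₂ ∧
      G.Adj (.inr y) (.inl x₁) ∧ G.Adj (.inr y) (.inl x₂))
    (hY : (∃ (x : Fin m) (y₁ y₂ : Fin n), y₁ ≠ y₂ ∧
        G.Adj (.inl x) (.inr y₁) ∧ G.Adj (.inl x) (.inr y₂)) ∨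
      (∃ (x : Fin m) (y : Fin n), G.Adj (.inl x) (.inr y) ∧
        (G.neighborSet (.inl x)).ncard = 1 ∧ (G.neighborSet (.inr y)).ncard = 1)) :
    (∀ v, (G.neighborSet v).Nonempty) ∧
    (∀ c : G.ConnectedComponent, IsStarOn G c.supp ∧ 2 ≤ c.supp.ncard) ∧
    Nat.card G.ConnectedComponent = matchingNumber G ∧
    G.edgeSet.ncard = m + n - matchingNumber G := by
  have hP4 := hsat.2.2.1
  have hK3 := hsat.cliqueFree_three
  have hcenterY : ∃ y, IsStarCenter G (.inr y) := by
    obtain ⟨y, x₁, x₂, hne, h₁, h₂⟩ := hX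
    exact ⟨y, isStarCenter_of_adj_of_adj hP4 hK3 h₁ h₂ (by simpa)⟩
  have hcenterX : ∃ x, IsStarCenter G (.inl x) := by
    rcases hY with ⟨x, y₁, y₂, hne, h₁, h₂⟩ | ⟨x, y, hxy, hx, hy⟩
    · exact ⟨x, isStarCenter_of_adj_of_adj hP4 hK3 h₁ h₂ (by simpa)⟩
    · exact ⟨x, isStarCenter_of_ncard_neighborSet_eq_one hxy hx hy⟩
  have hG := hsat.neighborSet_nonempty hcenterX hcenterY
  have hF := isStarForest_of_forall_neighborSet_nonempty hP4 hK3 hG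
  refine ⟨hG, fun c => ⟨hF.isStarOn_supp c, hF.two_le_ncard_supp c⟩,
    hF.matchingNumber_eq.symm, ?_⟩
  rw [hF.ncard_edgeSet, hF.matchingNumber_eq, Nat.card_sum, Nat.card_fin, Nat.card_fin]
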